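/- arXiv:2605.27592 — 3 statements merged into one kernel-verified Lean document; each statement's English description precedes it below -/
import Mathlib

section
/- Let m : ℝ → ℝ be twice continuously differentiable and strictly increasing with m′(x) > 0 for all x, m(x₀) = 0 for some x₀ ∈ ℝ, and m(x) → ±1 as x → ±∞. For each E ∈ (0,1), let x₋(E) < x₊(E) denote the two unique solutions of m(x)² = E. Then, as E → 0⁺, ∫_{x₋(E)}^{x₊(E)} √(E − m(x)²) dx = πE/(2 m′(x₀)) + O(E^{3/2}). -/
/-!
Substituting `u = m x` turns `∫ √(E - m²) m'` into the half-disc area `π E / 2`, so the error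
term is `∫ √(E - m²) (m' x₀ - m') / m' x₀`. If `m' ≥ c > 0` near `x₀`, the turning points
`m⁻¹(±√E)` lie within `√E / c` of `x₀`; since `m'` is Lipschitz there, the integrand is
`O(√E · √E)` on an interval of length `O(√E)`.
-/

open intervalIntegral Filter Asymptotics Real Set Topology

theorem integral_sqrt_sq_sub_sq {s : ℝ} (hs : 0 ≤ s) :
    ∫ u in -s..s, √(s ^ 2 - u ^ 2) = π * s ^ 2 / 2 := by
  have hscale : ∀ v, √(s ^ 2 - (s * v) ^ 2) = s * √(1 - v ^ 2) := fun v => by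
    rw [show s ^ 2 - (s * v) ^ 2 = s ^ 2 * (1 - v ^ 2) by ring, sqrt_mul (sq_nonneg s),
      sqrt_sq hs]
  have h := smul_integral_comp_mul_left (a := -1) (b := 1) (fun u => √(s ^ 2 - u ^ 2)) s
  simp only [hscale, integral_const_mul, integral_sqrt_one_sub_sq, smul_eq_mul, mul_neg,
    mul_one] at h
  rw [← h]
  ring

theorem integral_sqrt_sq_sub_sq_comp_mul_deriv {f f' : ℝ → ℝ} {a b s : ℝ}
    (hf : ∀ x ∈ uIcc a b, HasDerivAt f (f' x) x) (hf' : ContinuousOn f' (uIcc a b))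
    (ha : f a = -s) (hb : f b = s) (hs : 0 ≤ s) :
    ∫ x in a..b, √(s ^ 2 - f x ^ 2) * f' x = π * s ^ 2 / 2 := by
  have h := integral_comp_mul_deriv hf hf' (g := fun u => √(s ^ 2 - u ^ 2))
    (continuous_const.sub (continuous_pow 2)).sqrt
  rw [ha, hb, integral_sqrt_sq_sub_sq hs] at h
  exact h

theorem abs_integral_sqrt_sq_sub_sq_comp_sub_le {f f' : ℝ → ℝ} {a b s d L : ℝ}
    (hf : ∀ x ∈ uIcc a b, HasDerivAt f (f' x) x) (hf' : ContinuousOn f' (uIcc a b))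
    (ha : f a = -s) (hb : f b = s) (hs : 0 ≤ s) (hd : 0 < d)
    (hL : ∀ x ∈ uIcc a b, |f' x - d| ≤ L) :
    |(∫ x in a..b, √(s ^ 2 - f x ^ 2)) - π * s ^ 2 / (2 * d)| ≤ s * L / d * |b - a| := by
  have hfc : ContinuousOn f (uIcc a b) := fun x hx => (hf x hx).continuousAt.continuousWithinAt
  have hg : ContinuousOn (fun x => √(s ^ 2 - f x ^ 2)) (uIcc a b) :=
    (continuousOn_const.sub (hfc.pow 2)).sqrt
  -- `u = f x` turns `∫ √(s² - f²) f'` into the area `π s² / 2` of a half-disc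
  have hdiff : (∫ x in a..b, √(s ^ 2 - f x ^ 2)) - π * s ^ 2 / (2 * d)
      = ∫ x in a..b, √(s ^ 2 - f x ^ 2) * (d - f' x) / d := by
    rw [show π * s ^ 2 / (2 * d) = (π * s ^ 2 / 2) / d by ring,
      ← integral_sqrt_sq_sub_sq_comp_mul_deriv hf hf' ha hb hs, ← integral_div,
      ← integral_sub hg.intervalIntegrable
        (ContinuousOn.intervalIntegrable (u := fun x => √(s ^ 2 - f x ^ 2) * f' x / d)
          ((hg.mul hf').div_const d))]
    refine integral_congr fun x _ => ?_
    field_simp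
  rw [hdiff, ← Real.norm_eq_abs]
  refine norm_integral_le_of_norm_le_const fun x hx => ?_
  have hsqrt : √(s ^ 2 - f x ^ 2) ≤ s :=
    sqrt_le_iff.2 ⟨hs, by nlinarith [sq_nonneg (f x)]⟩
  rw [Real.norm_eq_abs, abs_div, abs_mul, abs_of_nonneg (sqrt_nonneg _), abs_of_pos hd,
    abs_sub_comm]
  gcongr
  exact hL x (uIoc_subset_uIcc hx)

theorem Convex.abs_sub_le_abs_image_sub_div_of_le_deriv {D : Set ℝ} (hD : Convex ℝ D) {f : ℝ → ℝ}
    (hf : ContinuousOn f D) (hf' : DifferentiableOn ℝ f (interior D)) {c : ℝ} (hc : 0 < c)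
    (hcf : ∀ x ∈ interior D, c ≤ deriv f x) {x y : ℝ} (hx : x ∈ D) (hy : y ∈ D) :
    |y - x| ≤ |f y - f x| / c := by
  wlog hxy : x ≤ y generalizing x y
  · rw [abs_sub_comm, abs_sub_comm (f y)]
    exact this hy hx (le_of_not_ge hxy)
  have := hD.mul_sub_le_image_sub_of_le_deriv hf hf' hcf x hx y hy hxy
  rw [abs_of_nonneg (sub_nonneg.2 hxy), le_div_iff₀ hc]
  linarith [le_abs_self (f y - f x)]

theorem eq_neg_sqrt_and_eq_sqrt_of_sq_eq {u v E : ℝ} (huv : u < v) (hu : u ^ 2 = E)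
    (hv : v ^ 2 = E) : u = -√E ∧ v = √E := by
  have hu' : u = -v := (sq_eq_sq_iff_eq_or_eq_neg.1 (hu.trans hv.symm)).resolve_left huv.ne
  have hv0 : 0 ≤ v := by linarith
  have hv' : v = √E := by rw [← hv, sqrt_sq hv0]
  exact ⟨hu'.trans (congrArg Neg.neg hv'), hv'⟩

theorem eventually_lt_neg_sqrt_and_sqrt_lt {p q : ℝ} (hp : p < 0) (hq : 0 < q) :
    ∀ᶠ E in 𝓝[>] 0, p < -√E ∧ √E < q := by
  have hsqrt : Tendsto (√·) (𝓝[>] 0) (𝓝 0) := by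
    simpa using continuous_sqrt.tendsto 0 |>.mono_left nhdsWithin_le_nhds
  filter_upwards [hsqrt.eventually (eventually_lt_nhds (neg_pos.2 hp)),
    hsqrt.eventually (eventually_lt_nhds hq)] with E hlo hhi
  exact ⟨by linarith, hhi⟩

theorem abs_integral_sqrt_sq_sub_sq_comp_sub_le_of_lipschitzOnWith {m : ℝ → ℝ} {I : Set ℝ}
    (hI : Convex ℝ I) (hm : Differentiable ℝ m) {c : ℝ} (hc : 0 < c)
    (hcm : ∀ x ∈ I, c ≤ deriv m x) {K : NNReal} (hK : LipschitzOnWith K (deriv m) I)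
    {a b x₀ s : ℝ} (ha : a ∈ I) (hb : b ∈ I) (hab : a ≤ b) (hx₀ : x₀ ∈ I) (hmx₀ : m x₀ = 0)
    (hma : m a = -s) (hmb : m b = s) :
    |(∫ x in a..b, √(s ^ 2 - m x ^ 2)) - π * s ^ 2 / (2 * deriv m x₀)|
      ≤ 2 * K / (c ^ 2 * deriv m x₀) * s ^ 3 := by
  have hcm' : ∀ x ∈ interior I, c ≤ deriv m x := fun x hx => hcm x (interior_subset hx)
  have hmono : MonotoneOn m I := monotoneOn_of_deriv_nonneg hI hm.continuous.continuousOn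
    hm.differentiableOn fun x hx => hc.le.trans (hcm' x hx)
  have hdist {x y : ℝ} (hx : x ∈ I) (hy : y ∈ I) : |y - x| ≤ |m y - m x| / c :=
    hI.abs_sub_le_abs_image_sub_div_of_le_deriv hm.continuous.continuousOn hm.differentiableOn hc
      hcm' hx hy
  have hs : 0 ≤ s := by linarith [hma ▸ hmb ▸ hmono ha hb hab]
  have hd : 0 < deriv m x₀ := hc.trans_le (hcm x₀ hx₀)
  have hsub : uIcc a b ⊆ I := uIcc_of_le hab ▸ hI.ordConnected.out ha hb
  have hL : ∀ x ∈ uIcc a b, |deriv m x - deriv m x₀| ≤ K * (s / c) := by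
    intro x hx
    have hmx : |m x| ≤ s := by
      have hx' : x ∈ Icc a b := uIcc_of_le hab ▸ hx
      exact abs_le.2 ⟨hma ▸ hmono ha (hsub hx) hx'.1, hmb ▸ hmono (hsub hx) hb hx'.2⟩
    have hx₀x := hdist hx₀ (hsub hx)
    rw [hmx₀, sub_zero] at hx₀x
    calc |deriv m x - deriv m x₀| ≤ K * |x - x₀| := by
          simpa only [Real.dist_eq] using hK.dist_le_mul x (hsub hx) x₀ hx₀
      _ ≤ K * (s / c) := by gcongr; exact hx₀x.trans (by gcongr)
  have hwidth : |b - a| ≤ 2 * s / c := by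
    have := hdist ha hb
    rwa [hma, hmb, sub_neg_eq_add, ← two_mul, abs_of_nonneg (by positivity : 0 ≤ 2 * s)] at this
  calc _ ≤ s * (K * (s / c)) / deriv m x₀ * |b - a| :=
        abs_integral_sqrt_sq_sub_sq_comp_sub_le (fun x _ => (hm x).hasDerivAt)
          (hK.continuousOn.mono hsub) hma hmb hs hd hL
    _ ≤ s * (K * (s / c)) / deriv m x₀ * (2 * s / c) := by gcongr
    _ = 2 * K / (c ^ 2 * deriv m x₀) * s ^ 3 := by field_simp

theorem stmt12_general (m : ℝ → ℝ) (hm : ContDiff ℝ 2 m)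
    (hmono : StrictMono m) (hm' : ∀ x : ℝ, 0 < deriv m x)
    (x₀ : ℝ) (hx₀ : m x₀ = 0)
    (xm xp : ℝ → ℝ)
    (hturn : ∀ E ∈ Set.Ioo (0 : ℝ) 1,
      xm E < xp E ∧ m (xm E) ^ 2 = E ∧ m (xp E) ^ 2 = E ∧
      ∀ x : ℝ, m x ^ 2 = E → x = xm E ∨ x = xp E) :
    (fun E : ℝ =>
        (∫ x in xm E..xp E, Real.sqrt (E - m x ^ 2)) -
          Real.pi * E / (2 * deriv m x₀)) =O[nhdsWithin 0 (Set.Ioi 0)]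
      fun E : ℝ => E ^ ((3 : ℝ) / 2) := by
  set I := Icc (x₀ - 1) (x₀ + 1)
  have hx₀I : x₀ ∈ I := ⟨by linarith, by linarith⟩
  obtain ⟨c, hc, hcI⟩ : ∃ c > 0, ∀ x ∈ I, c ≤ deriv m x := by
    obtain ⟨z, -, hz⟩ := isCompact_Icc.exists_isMinOn ⟨x₀, hx₀I⟩
      (hm.continuous_deriv one_le_two).continuousOn
    exact ⟨deriv m z, hm' z, hz⟩
  obtain ⟨K, hK⟩ := hm.deriv'.contDiffOn.exists_lipschitzOnWith one_ne_zero
    (convex_Icc (x₀ - 1) (x₀ + 1)) isCompact_Icc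
  refine IsBigO.of_bound (2 * K / (c ^ 2 * deriv m x₀)) ?_
  filter_upwards [(eventually_lt_nhds one_pos).filter_mono nhdsWithin_le_nhds,
    eventually_lt_neg_sqrt_and_sqrt_lt (hx₀ ▸ hmono (sub_one_lt x₀))
      (hx₀ ▸ hmono (lt_add_one x₀)), self_mem_nhdsWithin] with E hE1 ⟨hlo, hhi⟩ (hE0 : 0 < E)
  obtain ⟨hab, hma, hmb, -⟩ := hturn E ⟨hE0, hE1⟩
  obtain ⟨hma, hmb⟩ := eq_neg_sqrt_and_eq_sqrt_of_sq_eq (hmono hab) hma hmb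
  have hsub : Icc (xm E) (xp E) ⊆ I :=
    Icc_subset_Icc (hmono.lt_iff_lt.1 (hma ▸ hlo)).le (hmono.lt_iff_lt.1 (hmb ▸ hhi)).le
  have hbound := abs_integral_sqrt_sq_sub_sq_comp_sub_le_of_lipschitzOnWith (convex_Icc _ _)
    (hm.differentiable two_ne_zero) hc hcI hK (hsub ⟨le_rfl, hab.le⟩) (hsub ⟨hab.le, le_rfl⟩)
    hab.le hx₀I hx₀ hma hmb
  rw [sq_sqrt hE0.le] at hbound
  rwa [Real.norm_eq_abs, norm_of_nonneg (by positivity), rpow_div_two_eq_sqrt 3 hE0.le,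
    rpow_ofNat]

/-- for a strictly increasing C² mass profile with a simple zero at `x₀`
and limits `±1` at `±∞`, the Bohr–Sommerfeld phase integral between the turning points
`x₋(E) < x₊(E)` satisfies, as `E → 0⁺`,
`∫_{x₋(E)}^{x₊(E)} √(E − m(x)²) dx = πE/(2m′(x₀)) + O(E^{3/2})`. -/
theorem stmt12 (m : ℝ → ℝ) (hm : ContDiff ℝ 2 m)
    (hmono : StrictMono m) (hm' : ∀ x : ℝ, 0 < deriv m x)
    (x₀ : ℝ) (hx₀ : m x₀ = 0)
    (htop : Tendsto m atTop (nhds 1)) (hbot : Tendsto m atBot (nhds (-1)))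
    (xm xp : ℝ → ℝ)
    (hturn : ∀ E ∈ Set.Ioo (0 : ℝ) 1,
      xm E < xp E ∧ m (xm E) ^ 2 = E ∧ m (xp E) ^ 2 = E ∧
      ∀ x : ℝ, m x ^ 2 = E → x = xm E ∨ x = xp E) :
    (fun E : ℝ =>
        (∫ x in xm E..xp E, Real.sqrt (E - m x ^ 2)) -
          Real.pi * E / (2 * deriv m x₀)) =O[nhdsWithin 0 (Set.Ioi 0)]
      fun E : ℝ => E ^ ((3 : ℝ) / 2) :=
  stmt12_general m hm hmono hm' x₀ hx₀ xm xp hturn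
end

section
/- For every E ∈ (0,1), ∫_{−artanh(√E)}^{artanh(√E)} √(E − tanh(x)²) dx = π·(1 − √(1 − E)). Here artanh(√E) is the inverse hyperbolic tangent of √E, so the interval of integration is exactly the classically allowed region {x : tanh(x)² < E}. -/
open intervalIntegral Real

noncomputable def artanh (y : ℝ) : ℝ := (1 / 2) * Real.log ((1 + y) / (1 - y))

/-!
On `(-artanh a, artanh a)`, where `tanh² x < a²`, the function
`arcsin (tanh x / a) - b · arcsin (b sinh x / a)` with `b = √(1 - a²)` is an explicit primitive of
`√(a² - tanh² x)`: the derivatives of the two terms are `sech² x / √(a² - tanh² x)` and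
`b² / √(a² - tanh² x)`, and `sech² x - b² = a² - tanh² x`. At `x = ± artanh a` both arcsine
arguments equal `± 1`, so the integral is `π - b π`.
-/

theorem HasDerivAt.arcsin {f : ℝ → ℝ} {f' x : ℝ} (hf : HasDerivAt f f' x) (hx : f x ^ 2 < 1) :
    HasDerivAt (fun y => arcsin (f y)) (f' / √(1 - f x ^ 2)) x := by
  have hlt : |f x| < 1 := by rwa [← sq_lt_one_iff_abs_lt_one]
  have h := (Real.hasDerivAt_arcsin (abs_lt.1 hlt).1.ne' (abs_lt.1 hlt).2.ne).comp x hf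
  rwa [one_div_mul_eq_div] at h

theorem Real.tanh_eq_sinh_div_cosh' : tanh = sinh / cosh :=
  funext tanh_eq_sinh_div_cosh

@[fun_prop]
theorem Real.continuous_tanh : Continuous tanh := by
  rw [tanh_eq_sinh_div_cosh']
  exact continuous_sinh.div continuous_cosh fun x => (cosh_pos x).ne'

theorem Real.hasDerivAt_tanh (x : ℝ) : HasDerivAt tanh (1 / cosh x ^ 2) x := by
  have h := (hasDerivAt_sinh x).div (hasDerivAt_cosh x) (cosh_pos x).ne'
  rw [← tanh_eq_sinh_div_cosh', ← sq, ← sq, cosh_sq_sub_sinh_sq] at h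
  exact h

theorem Real.one_div_cosh_sq (x : ℝ) : 1 / cosh x ^ 2 = 1 - tanh x ^ 2 := by
  have hc := (cosh_pos x).ne'
  rw [tanh_eq_sinh_div_cosh]
  field_simp
  linear_combination -cosh_sq' x

theorem sq_sub_one_sub_sq_mul_sinh_sq (a x : ℝ) :
    a ^ 2 - (1 - a ^ 2) * sinh x ^ 2 = cosh x ^ 2 * (a ^ 2 - tanh x ^ 2) := by
  have hc := (cosh_pos x).ne'
  rw [tanh_eq_sinh_div_cosh]
  field_simp
  linear_combination -a ^ 2 * cosh_sq' x

theorem tanh_sq_lt_sq_of_mem_Ioo {a x : ℝ} (ha : 0 < a)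
    (hx : x ∈ Set.Ioo (-Real.artanh a) (Real.artanh a)) : tanh x ^ 2 < a ^ 2 := by
  have lt_of_lt_artanh : ∀ y, y < Real.artanh a → tanh y < a := fun y hy => by
    by_contra! h
    have := Real.artanh_le_artanh (by linarith) (tanh_lt_one y) h
    rw [Real.artanh_tanh] at this
    linarith
  have h₁ := lt_of_lt_artanh x hx.2
  have h₂ := lt_of_lt_artanh (-x) (by linarith [hx.1])
  rw [tanh_neg] at h₂
  exact sq_lt_sq' (by linarith) h₁

noncomputable def tanhPhasePrimitive (a x : ℝ) : ℝ :=
  arcsin (tanh x / a) - √(1 - a ^ 2) * arcsin (√(1 - a ^ 2) / a * sinh x)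

theorem continuous_tanhPhasePrimitive (a : ℝ) : Continuous (tanhPhasePrimitive a) := by
  unfold tanhPhasePrimitive
  fun_prop

theorem hasDerivAt_arcsin_tanh_div {a x : ℝ} (ha : 0 < a) (hx : tanh x ^ 2 < a ^ 2) :
    HasDerivAt (fun y => arcsin (tanh y / a)) ((1 - tanh x ^ 2) / √(a ^ 2 - tanh x ^ 2)) x := by
  have hsq : 1 - (tanh x / a) ^ 2 = (a ^ 2 - tanh x ^ 2) / a ^ 2 := by field_simp
  have h := ((hasDerivAt_tanh x).div_const a).arcsin
    (by rwa [div_pow, div_lt_one (by positivity)])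
  rw [hsq, sqrt_div' _ (sq_nonneg a), sqrt_sq ha.le, one_div_cosh_sq] at h
  convert h using 1
  field_simp

theorem hasDerivAt_arcsin_mul_sinh {a x : ℝ} (ha : a ∈ Set.Ioo 0 1) (hx : tanh x ^ 2 < a ^ 2) :
    HasDerivAt (fun y => arcsin (√(1 - a ^ 2) / a * sinh y))
      (√(1 - a ^ 2) / √(a ^ 2 - tanh x ^ 2)) x := by
  have ha0 := ha.1.ne'
  have hb : √(1 - a ^ 2) ^ 2 = 1 - a ^ 2 := sq_sqrt (by nlinarith [ha.2, ha.1])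
  have hsq :
      1 - (√(1 - a ^ 2) / a * sinh x) ^ 2 = cosh x ^ 2 * (a ^ 2 - tanh x ^ 2) / a ^ 2 := by
    rw [← sq_sub_one_sub_sq_mul_sinh_sq]
    field_simp
    rw [hb]
  have hpos : 0 < cosh x ^ 2 * (a ^ 2 - tanh x ^ 2) := mul_pos (by positivity) (by linarith)
  have h := ((hasDerivAt_sinh x).const_mul (√(1 - a ^ 2) / a)).arcsin
    (by rw [← sub_pos, hsq]; exact div_pos hpos (by positivity))
  rw [hsq, sqrt_div' _ (sq_nonneg a), sqrt_sq ha.1.le, sqrt_mul (sq_nonneg _),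
    sqrt_sq (cosh_pos x).le] at h
  convert h using 1
  have := (cosh_pos x).ne'
  have : 0 < √(a ^ 2 - tanh x ^ 2) := sqrt_pos.2 (by linarith)
  field_simp

theorem hasDerivAt_tanhPhasePrimitive {a x : ℝ} (ha : a ∈ Set.Ioo 0 1) (hx : tanh x ^ 2 < a ^ 2) :
    HasDerivAt (tanhPhasePrimitive a) √(a ^ 2 - tanh x ^ 2) x := by
  refine HasDerivAt.congr_deriv (f := tanhPhasePrimitive a)
    ((hasDerivAt_arcsin_tanh_div ha.1 hx).sub
      ((hasDerivAt_arcsin_mul_sinh ha hx).const_mul √(1 - a ^ 2))) ?_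
  have hb : √(1 - a ^ 2) ^ 2 = 1 - a ^ 2 := sq_sqrt (by nlinarith [ha.2, ha.1])
  have hr : √(a ^ 2 - tanh x ^ 2) ^ 2 = a ^ 2 - tanh x ^ 2 := sq_sqrt (by linarith)
  have hr0 : 0 < √(a ^ 2 - tanh x ^ 2) := sqrt_pos.2 (by linarith)
  field_simp
  linear_combination -hr - hb

theorem tanhPhasePrimitive_neg (a x : ℝ) : tanhPhasePrimitive a (-x) = -tanhPhasePrimitive a x := by
  simp only [tanhPhasePrimitive, tanh_neg, sinh_neg, neg_div, mul_neg, arcsin_neg]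
  ring

theorem tanhPhasePrimitive_artanh {a : ℝ} (ha : a ∈ Set.Ioo (-1) 1) (ha0 : a ≠ 0) :
    tanhPhasePrimitive a (Real.artanh a) = π / 2 * (1 - √(1 - a ^ 2)) := by
  have hb : 0 < √(1 - a ^ 2) := sqrt_pos.2 (by nlinarith [ha.1, ha.2])
  have hunit : √(1 - a ^ 2) / a * (a / √(1 - a ^ 2)) = 1 := by field_simp
  rw [tanhPhasePrimitive, Real.tanh_artanh ha, Real.sinh_artanh ha, div_self ha0, hunit,
    arcsin_one]
  ring

theorem integral_sqrt_sq_sub_tanh_sq {a : ℝ} (ha : a ∈ Set.Ioo 0 1) :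
    ∫ x in -Real.artanh a..Real.artanh a, √(a ^ 2 - tanh x ^ 2) = π * (1 - √(1 - a ^ 2)) := by
  have hL : -Real.artanh a ≤ Real.artanh a := by linarith [Real.artanh_pos ha]
  have hint : Continuous fun x => √(a ^ 2 - tanh x ^ 2) := by fun_prop
  rw [integral_eq_sub_of_hasDerivAt_of_le hL (continuous_tanhPhasePrimitive a).continuousOn
    (fun x hx => hasDerivAt_tanhPhasePrimitive ha (tanh_sq_lt_sq_of_mem_Ioo ha.1 hx))
    (hint.intervalIntegrable _ _), tanhPhasePrimitive_neg,
    tanhPhasePrimitive_artanh ⟨by linarith [ha.1], ha.2⟩ ha.1.ne']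
  ring

theorem artanh_eq_real_artanh {y : ℝ} (hy : y ∈ Set.Icc (-1) 1) :
    _root_.artanh y = Real.artanh y :=
  (Real.artanh_eq_half_log hy).symm

/-- for the mass profile `m(x) = tanh x` and `E ∈ (0,1)`, the
Bohr–Sommerfeld phase integral over the classically allowed region
`[−artanh √E, artanh √E]` evaluates in closed form:
`∫ √(E − tanh²x) dx = π(1 − √(1 − E))`. -/
theorem stmt14 (E : ℝ) (hE : E ∈ Set.Ioo (0 : ℝ) 1) :
    ∫ x in (-_root_.artanh (Real.sqrt E))..(_root_.artanh (Real.sqrt E)),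
        Real.sqrt (E - Real.tanh x ^ 2) =
      Real.pi * (1 - Real.sqrt (1 - E)) := by
  obtain ⟨hE0, hE1⟩ := hE
  have ha : √E ∈ Set.Ioo 0 1 := ⟨sqrt_pos.2 hE0, (sqrt_lt' one_pos).2 (by linarith)⟩
  have hsq : √E ^ 2 = E := sq_sqrt hE0.le
  rw [artanh_eq_real_artanh ⟨by linarith [ha.1], ha.2.le⟩]
  simpa only [hsq] using integral_sqrt_sq_sub_tanh_sq ha
end

section
/- Let m : ℝ → ℝ be twice continuously differentiable, let E ∈ ℝ, and let x_τ ∈ ℝ satisfy m(x_τ)² = E with λ := 2·m(x_τ)·m′(x_τ) < 0. Assume there is r > 0 such that E − m(s)² > 0 for all s ∈ (x_τ, x_τ + r]. Then, as δ → 0⁺, ∫_{x_τ}^{x_τ + δ} √(E − m(s)²) ds = (2/3)·√(−λ)·δ^{3/2} + O(δ^{5/2}). -/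
/-!
With `f = E - m²`, the turning point conditions say `f(x_τ) = 0` and `f'(x_τ) = -λ =: μ > 0`, so
Taylor's theorem gives `f(x_τ + t) = μ t + O(t²)`. Dividing by `√f + √(μ t) ≥ √(μ t)` turns this
into `√f(x_τ + t) = √μ √t + O(t^{3/2})`; in particular `f > 0` just right of `x_τ`. Integrating
over `[0, δ]`, the main term gives `(2/3) √μ δ^{3/2}` and the error `O(δ^{5/2})`.
-/

open intervalIntegral Filter Asymptotics Real Set Topology

lemma Real.abs_sqrt_sub_sqrt_le {a b : ℝ} (ha : 0 ≤ a) (hb : 0 < b) :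
    |√a - √b| ≤ |a - b| / √b := by
  have hsb : 0 < √b := Real.sqrt_pos.mpr hb
  rw [le_div_iff₀ hsb]
  have key : |√a - √b| * (√a + √b) = |a - b| := by
    rw [← abs_of_nonneg (by positivity : 0 ≤ √a + √b), ← abs_mul]
    congr 1
    linear_combination sq_sqrt ha - sq_sqrt hb.le
  nlinarith [abs_nonneg (√a - √b), Real.sqrt_nonneg a]

lemma ContDiff.isBigO_sub_sub_deriv_mul {f : ℝ → ℝ} (hf : ContDiff ℝ 2 f) (a : ℝ) :
    (fun t => f (a + t) - f a - deriv f a * t) =O[𝓝[>] 0] fun t => t ^ 2 := by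
  obtain ⟨C, hC⟩ := exists_taylor_mean_remainder_bound (f := f) (n := 1)
    (le_add_of_nonneg_right zero_le_one : a ≤ a + 1) hf.contDiffOn
  have htaylor : ∀ x, taylorWithinEval f 1 (Icc a (a + 1)) a x = f a + (x - a) * deriv f a := by
    intro x
    rw [taylorWithinEval_succ, taylor_within_zero_eval, iteratedDerivWithin_one,
      (hf.differentiable two_ne_zero a).derivWithin
        (uniqueDiffOn_Icc (lt_add_one a) a (left_mem_Icc.mpr (le_add_of_nonneg_right zero_le_one)))]
    simp
  refine IsBigO.of_bound C ?_
  filter_upwards [Ioo_mem_nhdsGT one_pos] with t ht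
  have h := hC (a + t) ⟨by linarith [ht.1], by linarith [ht.2]⟩
  rw [htaylor, add_sub_cancel_left] at h
  rw [Real.norm_of_nonneg (sq_nonneg t),
    show f (a + t) - f a - deriv f a * t = f (a + t) - (f a + t * deriv f a) by ring]
  exact h

lemma isBigO_sqrt_sub_sqrt_mul {g : ℝ → ℝ} {μ : ℝ} (hμ : 0 < μ)
    (hg : (fun t => g t - μ * t) =O[𝓝[>] 0] fun t => t ^ 2) :
    (fun t => √(g t) - √μ * √t) =O[𝓝[>] 0] fun t => t ^ ((3 : ℝ) / 2) := by
  obtain ⟨K, hK⟩ := hg.bound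
  have hsmall : (fun t => g t - μ * t) =o[𝓝[>] 0] fun t => t :=
    hg.trans_isLittleO ((isLittleO_pow_id one_lt_two).mono nhdsWithin_le_nhds)
  refine IsBigO.of_bound (K / √μ) ?_
  filter_upwards [hK, hsmall.bound (half_pos hμ), self_mem_nhdsWithin] with t hKt hsmallt ht
  have ht : 0 < t := ht
  simp only [norm_eq_abs, abs_of_pos ht] at hKt hsmallt
  have hgt : 0 ≤ g t := by nlinarith [(abs_le.mp hsmallt).1]
  have h32 : t ^ ((3 : ℝ) / 2) = t ^ 2 / √t := by
    rw [eq_div_iff (sqrt_pos.mpr ht).ne', sqrt_eq_rpow, ← rpow_add ht, ← rpow_natCast]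
    norm_num
  rw [norm_eq_abs, norm_eq_abs, abs_of_pos (by positivity : 0 < t ^ ((3 : ℝ) / 2)), h32,
    ← sqrt_mul hμ.le]
  calc |√(g t) - √(μ * t)| ≤ |g t - μ * t| / √(μ * t) := abs_sqrt_sub_sqrt_le hgt (by positivity)
    _ ≤ K * |t ^ 2| / √(μ * t) := by gcongr
    _ = K / √μ * (t ^ 2 / √t) := by
      rw [sqrt_mul hμ.le, abs_of_nonneg (sq_nonneg t)]; field_simp

lemma Asymptotics.IsBigO.intervalIntegral_rpow {h : ℝ → ℝ} {p : ℝ} (hp : 0 ≤ p)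
    (hh : h =O[𝓝[>] 0] fun t => t ^ p) :
    (fun δ => ∫ t in 0..δ, h t) =O[𝓝[>] 0] fun δ => δ ^ (p + 1) := by
  obtain ⟨c, hc, hbound⟩ := hh.exists_nonneg
  obtain ⟨ε, hε, hεsub⟩ := mem_nhdsGT_iff_exists_Ioo_subset.mp hbound.bound
  refine IsBigO.of_bound c ?_
  filter_upwards [Ioo_mem_nhdsGT hε] with δ hδ
  have hδ0 : 0 < δ := hδ.1
  have hle : ∀ t ∈ Set.uIoc 0 δ, ‖h t‖ ≤ c * δ ^ p := by
    intro t ht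
    rw [uIoc_of_le hδ0.le] at ht
    calc ‖h t‖ ≤ c * ‖t ^ p‖ := hεsub ⟨ht.1, ht.2.trans_lt hδ.2⟩
      _ ≤ c * δ ^ p := by
        rw [norm_of_nonneg (rpow_nonneg ht.1.le p)]
        exact mul_le_mul_of_nonneg_left (rpow_le_rpow ht.1.le ht.2 hp) hc
  calc ‖∫ t in 0..δ, h t‖ ≤ c * δ ^ p * |δ - 0| := norm_integral_le_of_norm_le_const hle
    _ = c * ‖δ ^ (p + 1)‖ := by
      rw [sub_zero, abs_of_pos hδ0, norm_of_nonneg (rpow_nonneg hδ0.le _), rpow_add_one hδ0.ne']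
      ring

lemma integral_const_mul_sqrt (μ δ : ℝ) :
    ∫ t in 0..δ, √μ * √t = 2 / 3 * √μ * δ ^ ((3 : ℝ) / 2) := by
  rw [integral_const_mul]
  simp_rw [sqrt_eq_rpow]
  rw [integral_rpow (Or.inl (by norm_num)), zero_rpow (by norm_num),
    show (1 : ℝ) / 2 + 1 = 3 / 2 by norm_num]
  ring

theorem isBigO_integral_sqrt_sub_of_simple_zero {f : ℝ → ℝ} {a μ : ℝ} (hf : Continuous f)
    (hμ : 0 < μ) (hfa : (fun t => f (a + t) - μ * t) =O[𝓝[>] 0] fun t => t ^ 2) :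
    (fun δ => (∫ s in a..a + δ, √(f s)) - 2 / 3 * √μ * δ ^ ((3 : ℝ) / 2))
      =O[𝓝[>] 0] fun δ => δ ^ ((5 : ℝ) / 2) := by
  have hshift : ∀ δ, ∫ s in a..a + δ, √(f s) = ∫ t in 0..δ, √(f (a + t)) := by
    intro δ
    simp only [integral_comp_add_left (fun s => √(f s)) a, add_zero]
  have hdiff : ∀ δ, (∫ s in a..a + δ, √(f s)) - 2 / 3 * √μ * δ ^ ((3 : ℝ) / 2)
      = ∫ t in 0..δ, (√(f (a + t)) - √μ * √t) := by
    intro δ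
    rw [hshift, ← integral_const_mul_sqrt, integral_sub]
    · exact (continuous_sqrt.comp (hf.comp (continuous_const_add a))).intervalIntegrable _ _
    · exact (continuous_const.mul continuous_sqrt).intervalIntegrable _ _
  simp_rw [hdiff]
  have h := (isBigO_sqrt_sub_sqrt_mul hμ hfa).intervalIntegral_rpow (by norm_num)
  rwa [show (3 : ℝ) / 2 + 1 = 5 / 2 by norm_num] at h

theorem stmt19_general (m : ℝ → ℝ) (hm : ContDiff ℝ 2 m) (E : ℝ)
    (xτ : ℝ) (hturn : m xτ ^ 2 = E)
    (lam : ℝ) (hlam : lam = 2 * m xτ * deriv m xτ) (hneg : lam < 0) :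
    (fun δ : ℝ =>
        (∫ s in xτ..(xτ + δ), Real.sqrt (E - m s ^ 2)) -
          (2 / 3) * Real.sqrt (-lam) * δ ^ ((3 : ℝ) / 2))
      =O[nhdsWithin 0 (Set.Ioi 0)] fun δ : ℝ => δ ^ ((5 : ℝ) / 2) := by
  have hf : ContDiff ℝ 2 fun x => E - m x ^ 2 := contDiff_const.sub (hm.pow 2)
  have hderiv : deriv (fun x => E - m x ^ 2) xτ = -lam := by
    rw [deriv_const_sub, deriv_fun_pow (hm.differentiable two_ne_zero xτ), hlam]
    ring
  have htaylor := hf.isBigO_sub_sub_deriv_mul xτ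
  rw [hderiv, hturn, sub_self] at htaylor
  simp only [sub_zero] at htaylor
  exact isBigO_integral_sqrt_sub_of_simple_zero hf.continuous (neg_pos.mpr hneg) htaylor

/-- at a left turning point `x_τ` (`m(x_τ)² = E`,
`λ = 2m(x_τ)m′(x_τ) < 0`, with the classically allowed region immediately to the
right), the leading WKB phase satisfies, as `δ → 0⁺`,
`∫_{x_τ}^{x_τ+δ} √(E − m(s)²) ds = (2/3)√(−λ) δ^{3/2} + O(δ^{5/2})`. -/
theorem stmt19 (m : ℝ → ℝ) (hm : ContDiff ℝ 2 m) (E : ℝ)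
    (xτ : ℝ) (hturn : m xτ ^ 2 = E)
    (lam : ℝ) (hlam : lam = 2 * m xτ * deriv m xτ) (hneg : lam < 0)
    (r : ℝ) (hr : 0 < r)
    (hallowed : ∀ s ∈ Set.Ioc xτ (xτ + r), 0 < E - m s ^ 2) :
    (fun δ : ℝ =>
        (∫ s in xτ..(xτ + δ), Real.sqrt (E - m s ^ 2)) -
          (2 / 3) * Real.sqrt (-lam) * δ ^ ((3 : ℝ) / 2))
      =O[nhdsWithin 0 (Set.Ioi 0)] fun δ : ℝ => δ ^ ((5 : ℝ) / 2) :=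
  stmt19_general m hm E xτ hturn lam hlam hneg
end
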